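/- Consider the latent-factor model: on a probability space, let U : Ω → 𝒰 be the shared latent factor and W = (L, V, ε) : Ω → 𝒲 aggregate the uniformly distributed layer index L on {1,…,N}, the layer-specific latent factor V, and the noise ε, with values in standard Borel spaces; let W' be identically distributed to W with U, W, W' mutually independent. Set Z = q(U, W) and Z' = q(U, W') for a measurable map q, and let C = f_C(Z) and P = f_P(Z) for measurable encoders with C square-integrable in ℝ^d. If (i) E[‖f_C(Z) − f_C(Z')‖²] = 0 (the matching loss attains its global minimum), (ii) L and Z are conditionally independent given P (P is sufficient for the layer index, as enforced at optimality of the self-supervised and causal losses), and (iii) σ(P) ⊆ σ(V) (minimal sufficiency relative to the sufficient σ-algebra σ(V)), then there exist measurable functions h and g such that C = h(U) almost surely and P = g(V) almost surely. Hence the common embedding depends only on the shared latent factor and the private embedding depends only on the layer-specific latent factor, so the two embeddings are disentangled, each encoding only role-specific information. -/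

import Mathlib

/-!
The matching loss vanishes only if `f_C(q(U, W)) = f_C(q(U, W'))` almost surely. Since `U`, `W`,
`W'` are independent and `W'` is a copy of `W`, Fubini turns this into: for almost every `u`, the
map `w ↦ f_C(q(u, w))` is almost surely constant, hence equal to its mean `h u`, so `C = h(U)`.
The private part is the Doob–Dynkin lemma applied to `σ(P) ⊆ σ(V)`.
-/

open MeasureTheory ProbabilityTheory Filter

section

variable {Ω α β E : Type*} [MeasurableSpace Ω] [MeasurableSpace α] [MeasurableSpace β]
  [NormedAddCommGroup E]

theorem ae_eq_of_integral_norm_sub_sq_eq_zero {μ : Measure Ω} {X Y : Ω → E}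
    (hX : MemLp X 2 μ) (hY : MemLp Y 2 μ) (h : ∫ ω, ‖X ω - Y ω‖ ^ 2 ∂μ = 0) :
    X =ᵐ[μ] Y := by
  have hint : Integrable (fun ω => ‖X ω - Y ω‖ ^ 2) μ :=
    (hX.sub hY).integrable_norm_pow two_ne_zero
  have hzero := (integral_eq_zero_iff_of_nonneg (fun ω => by positivity) hint).mp h
  filter_upwards [hzero] with ω hω
  simpa [sub_eq_zero] using hω

variable [NormedSpace ℝ E] [CompleteSpace E]

theorem MeasureTheory.Measure.ae_eq_integral_right_of_ae_eq_copies (μ : Measure α)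
    (ν : Measure β) [IsProbabilityMeasure ν] {F : α × β → E} (hF : StronglyMeasurable F)
    (h : ∀ᵐ p ∂μ.prod (ν.prod ν), F (p.1, p.2.1) = F (p.1, p.2.2)) :
    F =ᵐ[μ.prod ν] fun p => ∫ y, F (p.1, y) ∂ν := by
  have hmeas : MeasurableSet {p : α × β | F p = ∫ y, F (p.1, y) ∂ν} :=
    hF.measurableSet_eq_fun (hF.integral_prod_right'.comp_measurable measurable_fst)
  refine (Measure.ae_prod_iff_ae_ae hmeas).mpr ?_
  filter_upwards [Measure.ae_ae_of_ae_prod h] with x hx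
  -- for a.e. `x`, the section `F (x, ·)` is a.e. equal to one of its own values
  obtain ⟨y₀, hy₀⟩ := (Measure.ae_ae_of_ae_prod hx).exists
  have hconst : (fun y => F (x, y)) =ᵐ[ν] fun _ => F (x, y₀) := by
    filter_upwards [hy₀] with y hy using hy.symm
  have hmean : ∫ y, F (x, y) ∂ν = F (x, y₀) := by
    rw [integral_congr_ae hconst, integral_const, probReal_univ, one_smul]
  filter_upwards [hconst] with y hy
  rw [hmean, hy]

variable {μ : Measure Ω} [IsProbabilityMeasure μ] {X : Ω → α} {Y Y' : Ω → β}

theorem ProbabilityTheory.IndepFun.map_prod_prod_eq_of_map_eq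
    (hXYY' : IndepFun X (fun ω => (Y ω, Y' ω)) μ) (hYY' : IndepFun Y Y' μ)
    (hX : Measurable X) (hY : Measurable Y) (hY' : Measurable Y') (hid : μ.map Y = μ.map Y') :
    μ.map (fun ω => (X ω, Y ω, Y' ω)) = (μ.map X).prod ((μ.map Y).prod (μ.map Y)) := by
  rw [hXYY'.map_prod_eq_prod_map_map hX.aemeasurable (hY.prodMk hY').aemeasurable,
    hYY'.map_prod_eq_prod_map_map hY.aemeasurable hY'.aemeasurable, hid]

theorem ae_eq_integral_of_ae_eq_indep_copy
    (hXYY' : IndepFun X (fun ω => (Y ω, Y' ω)) μ) (hYY' : IndepFun Y Y' μ)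
    (hX : Measurable X) (hY : Measurable Y) (hY' : Measurable Y') (hid : μ.map Y = μ.map Y')
    {F : α × β → E} (hF : StronglyMeasurable F)
    (hae : (fun ω => F (X ω, Y ω)) =ᵐ[μ] fun ω => F (X ω, Y' ω)) :
    (fun ω => F (X ω, Y ω)) =ᵐ[μ] fun ω => ∫ y, F (X ω, y) ∂μ.map Y := by
  have : IsProbabilityMeasure (μ.map Y) := Measure.isProbabilityMeasure_map hY.aemeasurable
  have hcopies : ∀ᵐ p ∂(μ.map X).prod ((μ.map Y).prod (μ.map Y)),
      F (p.1, p.2.1) = F (p.1, p.2.2) := by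
    have hmeas : MeasurableSet {p : α × β × β | F (p.1, p.2.1) = F (p.1, p.2.2)} :=
      (hF.comp_measurable (by fun_prop)).measurableSet_eq_fun (hF.comp_measurable (by fun_prop))
    rw [← hXYY'.map_prod_prod_eq_of_map_eq hYY' hX hY hY' hid,
      ae_map_iff (hX.prodMk (hY.prodMk hY')).aemeasurable hmeas]
    exact hae
  have hlaw : μ.map (fun ω => (X ω, Y ω)) = (μ.map X).prod (μ.map Y) :=
    (hXYY'.comp measurable_id measurable_fst).map_prod_eq_prod_map_map hX.aemeasurable
      hY.aemeasurable
  have hprod := Measure.ae_eq_integral_right_of_ae_eq_copies (μ.map X) (μ.map Y) hF hcopies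
  rw [← hlaw] at hprod
  exact ae_of_ae_map (hX.prodMk hY).aemeasurable hprod

end

theorem stmt12_general {Ω : Type*} [MeasurableSpace Ω] (μ : Measure Ω)
    [IsProbabilityMeasure μ]
    {𝒰 𝒱 ℰ 𝒵 𝔓 : Type*}
    [MeasurableSpace 𝒰]
    [MeasurableSpace 𝒱]
    [MeasurableSpace ℰ]
    [MeasurableSpace 𝒵]
    [MeasurableSpace 𝔓] [StandardBorelSpace 𝔓] [Nonempty 𝔓]
    {N : ℕ} {d : ℕ}
    -- the shared latent factor, layer index, layer-specific factor and noise
    (U : Ω → 𝒰) (L : Ω → Fin N) (V : Ω → 𝒱) (ε : Ω → ℰ)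
    (hU : Measurable U) (hL : Measurable L) (hV : Measurable V)
    (hε : Measurable ε)
    -- the aggregated variable W = (L, V, ε) and an independent copy W'
    (W W' : Ω → Fin N × 𝒱 × ℰ)
    (hWdef : ∀ ω, W ω = (L ω, V ω, ε ω)) (hW' : Measurable W')
    -- W and W' are identically distributed
    (hid : Measure.map W μ = Measure.map W' μ)
    -- U, W, W' are mutually independent
    (hWW' : IndepFun W W' μ)
    (hU_WW' : IndepFun U (fun ω => (W ω, W' ω)) μ)
    -- observed data and encoders
    (q : 𝒰 × (Fin N × 𝒱 × ℰ) → 𝒵) (hq : Measurable q)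
    (Z Z' : Ω → 𝒵)
    (hZdef : ∀ ω, Z ω = q (U ω, W ω)) (hZ'def : ∀ ω, Z' ω = q (U ω, W' ω))
    (fC : 𝒵 → EuclideanSpace ℝ (Fin d)) (hfC : Measurable fC)
    (C : Ω → EuclideanSpace ℝ (Fin d)) (hCdef : ∀ ω, C ω = fC (Z ω))
    (P : Ω → 𝔓)
    (hC2 : MemLp C 2 μ)
    -- (i) the matching loss attains its global minimum
    (hmatch : ∫ ω, ‖fC (Z ω) - fC (Z' ω)‖ ^ 2 ∂μ = 0)
    -- (iii) minimal sufficiency: σ(P) ⊆ σ(V)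
    (hmin : MeasurableSpace.comap P inferInstance
      ≤ MeasurableSpace.comap V inferInstance) :
    -- the common embedding is a.s. a measurable function of U alone
    (∃ h : 𝒰 → EuclideanSpace ℝ (Fin d), Measurable h ∧
      C =ᵐ[μ] fun ω => h (U ω))
    -- and the private embedding is a.s. a measurable function of V alone
    ∧ ∃ g : 𝒱 → 𝔓, Measurable g ∧ P =ᵐ[μ] fun ω => g (V ω) := by
  obtain rfl : W = fun ω => (L ω, V ω, ε ω) := funext hWdef
  obtain rfl : Z = fun ω => q (U ω, (L ω, V ω, ε ω)) := funext hZdef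
  obtain rfl : Z' = fun ω => q (U ω, W' ω) := funext hZ'def
  obtain rfl : C = fun ω => fC (q (U ω, (L ω, V ω, ε ω))) := funext hCdef
  have hW : Measurable fun ω => (L ω, V ω, ε ω) := hL.prodMk (hV.prodMk hε)
  have hF : StronglyMeasurable fun p => fC (q p) := (hfC.comp hq).stronglyMeasurable
  have hUW_UW' :
      IdentDistrib (fun ω => (U ω, L ω, V ω, ε ω)) (fun ω => (U ω, W' ω)) μ μ :=
    (IdentDistrib.refl hU.aemeasurable).prodMk ⟨hW.aemeasurable, hW'.aemeasurable, hid⟩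
      (hU_WW'.comp measurable_id measurable_fst) (hU_WW'.comp measurable_id measurable_snd)
  have hC2' : MemLp (fun ω => fC (q (U ω, W' ω))) 2 μ :=
    (hUW_UW'.comp (hfC.comp hq)).memLp_snd hC2
  have hCC' := ae_eq_of_integral_norm_sub_sq_eq_zero hC2 hC2' hmatch
  refine ⟨⟨_, hF.integral_prod_right'.measurable,
    ae_eq_integral_of_ae_eq_indep_copy hU_WW' hWW' hU hW hW' hid hF hCC'⟩, ?_⟩
  obtain ⟨g, hg, rfl⟩ := (measurable_iff_comap_le.mpr hmin).exists_eq_measurable_comp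
  exact ⟨g, hg, .rfl⟩

theorem stmt12 {Ω : Type*} [MeasurableSpace Ω] (μ : Measure Ω)
    [IsProbabilityMeasure μ]
    {𝒰 𝒱 ℰ 𝒵 𝔓 : Type*}
    [MeasurableSpace 𝒰] [StandardBorelSpace 𝒰]
    [MeasurableSpace 𝒱] [StandardBorelSpace 𝒱]
    [MeasurableSpace ℰ] [StandardBorelSpace ℰ]
    [MeasurableSpace 𝒵]
    [MeasurableSpace 𝔓] [StandardBorelSpace 𝔓] [Nonempty 𝔓]
    {N : ℕ} (hN : 0 < N) {d : ℕ}
    -- the shared latent factor, layer index, layer-specific factor and noise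
    (U : Ω → 𝒰) (L : Ω → Fin N) (V : Ω → 𝒱) (ε : Ω → ℰ)
    (hU : Measurable U) (hL : Measurable L) (hV : Measurable V)
    (hε : Measurable ε)
    -- the aggregated variable W = (L, V, ε) and an independent copy W'
    (W W' : Ω → Fin N × 𝒱 × ℰ)
    (hWdef : ∀ ω, W ω = (L ω, V ω, ε ω)) (hW' : Measurable W')
    -- L is uniformly distributed on {1,…,N}
    (hunif : ∀ ℓ : Fin N, μ {ω | L ω = ℓ} = (N : ENNReal)⁻¹)
    -- W and W' are identically distributed
    (hid : Measure.map W μ = Measure.map W' μ)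
    -- U, W, W' are mutually independent
    (hWW' : IndepFun W W' μ)
    (hU_WW' : IndepFun U (fun ω => (W ω, W' ω)) μ)
    -- observed data and encoders
    (q : 𝒰 × (Fin N × 𝒱 × ℰ) → 𝒵) (hq : Measurable q)
    (Z Z' : Ω → 𝒵)
    (hZdef : ∀ ω, Z ω = q (U ω, W ω)) (hZ'def : ∀ ω, Z' ω = q (U ω, W' ω))
    (fC : 𝒵 → EuclideanSpace ℝ (Fin d)) (hfC : Measurable fC)
    (fP : 𝒵 → 𝔓) (hfP : Measurable fP)
    (C : Ω → EuclideanSpace ℝ (Fin d)) (hCdef : ∀ ω, C ω = fC (Z ω))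
    (P : Ω → 𝔓) (hPdef : ∀ ω, P ω = fP (Z ω))
    (hC2 : MemLp C 2 μ)
    -- (i) the matching loss attains its global minimum
    (hmatch : ∫ ω, ‖fC (Z ω) - fC (Z' ω)‖ ^ 2 ∂μ = 0)
    -- (ii) L and Z are conditionally independent given P
    (hcondindep : ∀ (ℓ : Fin N) (s : Set 𝒵), MeasurableSet s →
      (μ[Set.indicator ({ω | L ω = ℓ} ∩ Z ⁻¹' s) (fun _ => (1 : ℝ)) |
          MeasurableSpace.comap P inferInstance])
        =ᵐ[μ] fun ω =>
          (μ[Set.indicator {ω | L ω = ℓ} (fun _ => (1 : ℝ)) |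
              MeasurableSpace.comap P inferInstance]) ω *
          (μ[Set.indicator (Z ⁻¹' s) (fun _ => (1 : ℝ)) |
              MeasurableSpace.comap P inferInstance]) ω)
    -- (iii) minimal sufficiency: σ(P) ⊆ σ(V)
    (hmin : MeasurableSpace.comap P inferInstance
      ≤ MeasurableSpace.comap V inferInstance) :
    -- the common embedding is a.s. a measurable function of U alone
    (∃ h : 𝒰 → EuclideanSpace ℝ (Fin d), Measurable h ∧
      C =ᵐ[μ] fun ω => h (U ω))
    -- and the private embedding is a.s. a measurable function of V alone
    ∧ ∃ g : 𝒱 → 𝔓, Measurable g ∧ P =ᵐ[μ] fun ω => g (V ω) :=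
  stmt12_general μ U L V ε hU hL hV hε W W' hWdef hW' hid hWW' hU_WW' q hq Z Z' hZdef hZ'def fC hfC
    C hCdef P hC2 hmatch hmin
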